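/- arXiv:1105.6145 — 3 statements merged into one kernel-verified Lean document; each statement's English description precedes it below -/
import Mathlib

section
/- Every degree sequence d of a simple undirected graph on n nodes satisfies the inequality g(S,T,d,n) := |S|(n−1−|T|) − Σ_{i∈S} d_i + Σ_{i∈T} d_i ≥ 0 for every pair (S,T) of disjoint subsets of the vertex set {1,…,n}. -/
open Finset

lemma inter_card_eq_sum {n : ℕ} (G : SimpleGraph (Fin n)) [DecidableRel G.Adj]
    (i : Fin n) (T : Finset (Fin n)) :
    (G.neighborFinset i ∩ T).card = ∑ j ∈ T, if G.Adj i j then 1 else 0 := by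
  rw [Finset.inter_comm]
  have : T ∩ G.neighborFinset i = T.filter (fun j => G.Adj i j) := by
    ext j; simp [SimpleGraph.mem_neighborFinset, and_comm]
  rw [this, Finset.card_filter]

/-- Every degree sequence of a simple graph on `n` vertices satisfies
`g(S,T,d,n) = |S|(n-1-|T|) - ∑_{i∈S} d_i + ∑_{i∈T} d_i ≥ 0` for all disjoint `S`, `T`. -/
theorem degree_sequence_g_nonneg (n : ℕ) (G : SimpleGraph (Fin n)) [DecidableRel G.Adj]
    (S T : Finset (Fin n)) (hST : Disjoint S T) :
    0 ≤ (S.card : ℤ) * ((n : ℤ) - 1 - T.card)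
        - ∑ i ∈ S, (G.degree i : ℤ) + ∑ i ∈ T, (G.degree i : ℤ) := by
  -- split degrees over S
  have hdeg : ∀ i : Fin n, (G.degree i : ℤ)
      = ((G.neighborFinset i ∩ T).card : ℤ) + ((G.neighborFinset i \ T).card : ℤ) := by
    intro i
    rw [show G.degree i = (G.neighborFinset i ∩ T).card + (G.neighborFinset i \ T).card from
      (Finset.card_inter_add_card_sdiff _ _).symm, Nat.cast_add]
  -- bound the outside part
  have hout : ∀ i ∈ S, ((G.neighborFinset i \ T).card : ℤ) ≤ (n : ℤ) - 1 - T.card := by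
    intro i hi
    have hiT : i ∉ T := Finset.disjoint_left.mp hST hi
    have hsub : G.neighborFinset i \ T ⊆ Finset.univ \ insert i T := by
      intro j hj
      simp only [Finset.mem_sdiff, SimpleGraph.mem_neighborFinset, Finset.mem_insert,
        Finset.mem_univ, true_and] at hj ⊢
      rcases hj with ⟨hadj, hjT⟩
      push_neg
      exact ⟨fun h => G.irrefl (h ▸ hadj : G.Adj i i), hjT⟩
    have hcard := Finset.card_le_card hsub
    have h1 : (Finset.univ \ insert i T).card = n - (insert i T).card := by
      rw [Finset.card_sdiff_of_subset (Finset.subset_univ _), Finset.card_univ, Fintype.card_fin]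
    have h2 : (insert i T).card = T.card + 1 := Finset.card_insert_of_notMem hiT
    have h3 : T.card + 1 ≤ n := by
      have := Finset.card_le_univ (insert i T)
      rwa [h2, Fintype.card_fin] at this
    rw [h1, h2] at hcard
    have : ((G.neighborFinset i \ T).card : ℤ) ≤ ((n - (T.card + 1) : ℕ) : ℤ) := by
      exact_mod_cast hcard
    calc ((G.neighborFinset i \ T).card : ℤ) ≤ ((n - (T.card + 1) : ℕ) : ℤ) := this
      _ = (n : ℤ) - 1 - T.card := by
          rw [Nat.cast_sub h3]; push_cast; ring
  -- double counting
  have hswap : ∑ i ∈ S, ((G.neighborFinset i ∩ T).card : ℤ)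
      = ∑ j ∈ T, ((G.neighborFinset j ∩ S).card : ℤ) := by
    have := fun i => inter_card_eq_sum G i T
    simp only [inter_card_eq_sum]
    push_cast
    rw [Finset.sum_comm]
    refine Finset.sum_congr rfl fun j _ => Finset.sum_congr rfl fun i _ => ?_
    exact if_congr (G.adj_comm i j) rfl rfl
  have hT : ∀ j ∈ T, ((G.neighborFinset j ∩ S).card : ℤ) ≤ (G.degree j : ℤ) := by
    intro j _
    exact_mod_cast Finset.card_le_card (Finset.inter_subset_left)
  have key : ∑ i ∈ S, (G.degree i : ℤ)
      ≤ S.card * ((n : ℤ) - 1 - T.card) + ∑ j ∈ T, (G.degree j : ℤ) := by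
    calc ∑ i ∈ S, (G.degree i : ℤ)
        = ∑ i ∈ S, ((G.neighborFinset i ∩ T).card : ℤ)
          + ∑ i ∈ S, ((G.neighborFinset i \ T).card : ℤ) := by
          rw [← Finset.sum_add_distrib]; exact Finset.sum_congr rfl fun i _ => hdeg i
      _ ≤ ∑ j ∈ T, (G.degree j : ℤ) + S.card * ((n : ℤ) - 1 - T.card) := by
          gcongr ?_ + ?_
          · rw [hswap]; exact Finset.sum_le_sum hT
          · calc ∑ i ∈ S, ((G.neighborFinset i \ T).card : ℤ)
                ≤ ∑ _i ∈ S, ((n : ℤ) - 1 - T.card) := Finset.sum_le_sum hout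
              _ = S.card * ((n : ℤ) - 1 - T.card) := by
                  rw [Finset.sum_const, nsmul_eq_mul]
      _ = S.card * ((n : ℤ) - 1 - T.card) + ∑ j ∈ T, (G.degree j : ℤ) := by ring
  linarith
end

section
/- Let G be a simple undirected graph on n vertices with degree sequence d, and suppose there exist non-empty disjoint subsets S and T of the vertices such that: S is a clique of G, T is a stable (independent) set of G, every vertex of S is adjacent to every vertex of (S ∪ T)^c, and no vertex of T is adjacent to any vertex of (S ∪ T)^c. Then g(S,T,d,n) = |S|(n−1−|T|) − Σ_{i∈S} d_i + Σ_{i∈T} d_i = 0. -/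
open Finset

/-- If `S` is a clique, `T` is a stable set, every vertex of `S` is adjacent to every vertex of
`(S ∪ T)ᶜ` and no vertex of `T` is adjacent to any vertex of `(S ∪ T)ᶜ`, then
`g(S,T,d,n) = |S|(n-1-|T|) - ∑_{i∈S} d_i + ∑_{i∈T} d_i = 0`. -/
theorem degree_sequence_g_eq_zero (n : ℕ) (G : SimpleGraph (Fin n)) [DecidableRel G.Adj]
    (S T : Finset (Fin n)) (hS : S.Nonempty) (hT : T.Nonempty) (hST : Disjoint S T)
    (hclique : ∀ i ∈ S, ∀ j ∈ S, i ≠ j → G.Adj i j)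
    (hstable : ∀ i ∈ T, ∀ j ∈ T, ¬ G.Adj i j)
    (hSadj : ∀ i ∈ S, ∀ j : Fin n, j ∉ S → j ∉ T → G.Adj i j)
    (hTadj : ∀ i ∈ T, ∀ j : Fin n, j ∉ S → j ∉ T → ¬ G.Adj i j) :
    (S.card : ℤ) * ((n : ℤ) - 1 - T.card)
        - ∑ i ∈ S, (G.degree i : ℤ) + ∑ i ∈ T, (G.degree i : ℤ) = 0 := by
  have hdS : ∀ i ∈ S, (G.degree i : ℤ)
      = (n : ℤ) - 1 - T.card + ((T.filter (G.Adj i)).card : ℤ) := by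
    intro i hi
    have hiT : i ∉ T := Finset.disjoint_left.mp hST hi
    have hset : G.neighborFinset i = (univ \ insert i T) ∪ T.filter (G.Adj i) := by
      ext j
      simp only [SimpleGraph.mem_neighborFinset, mem_union, mem_sdiff, mem_univ, true_and,
        mem_insert, mem_filter, not_or]
      constructor
      · intro hadj
        by_cases hjT : j ∈ T
        · exact Or.inr ⟨hjT, hadj⟩
        · exact Or.inl ⟨G.ne_of_adj hadj |>.symm, hjT⟩
      · rintro (⟨hji, hjT⟩ | ⟨hjT, hadj⟩)
        · by_cases hjS : j ∈ S
          · exact hclique i hi j hjS (fun h => hji h.symm)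
          · exact hSadj i hi j hjS hjT
        · exact hadj
    have hdisj : Disjoint (univ \ insert i T) (T.filter (G.Adj i)) := by
      apply Finset.disjoint_left.mpr
      intro a ha hb
      exact (mem_sdiff.mp ha).2 (mem_insert_of_mem (mem_filter.mp hb).1)
    have hcard : (univ \ insert i T).card = n - (T.card + 1) := by
      rw [Finset.card_sdiff_of_subset (subset_univ _), Finset.card_insert_of_notMem hiT,
        Finset.card_univ, Fintype.card_fin, Nat.add_comm]
    have hle : T.card + 1 ≤ n := by
      have := Finset.card_le_univ (insert i T)
      simpa [Finset.card_insert_of_notMem hiT, Nat.add_comm] using this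
    rw [SimpleGraph.degree, hset, Finset.card_union_of_disjoint hdisj, hcard]
    push_cast [hle]
    ring
  have hdT : ∀ i ∈ T, (G.degree i : ℤ) = ((S.filter (fun j => G.Adj j i)).card : ℤ) := by
    intro i hi
    have hset : G.neighborFinset i = S.filter (fun j => G.Adj j i) := by
      ext j
      simp only [SimpleGraph.mem_neighborFinset, mem_filter]
      constructor
      · intro hadj
        by_cases hjS : j ∈ S
        · exact ⟨hjS, hadj.symm⟩
        · by_cases hjT : j ∈ T
          · exact absurd hadj (hstable i hi j hjT)
          · exact absurd hadj (hTadj i hi j hjS hjT)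
      · exact fun ⟨_, h⟩ => h.symm
    rw [SimpleGraph.degree, hset]
  rw [Finset.sum_congr rfl hdS, Finset.sum_congr rfl hdT]
  have hswap : ∑ i ∈ S, ((T.filter (G.Adj i)).card : ℤ)
      = ∑ i ∈ T, ((S.filter (fun j => G.Adj j i)).card : ℤ) := by
    simp only [Finset.card_filter]
    push_cast
    rw [Finset.sum_comm]
  rw [Finset.sum_add_distrib, hswap, Finset.sum_const, nsmul_eq_mul]
  ring
end

section
/- If G is a split graph on n vertices, i.e., its vertex set can be partitioned into a clique S and a stable set T (with S, T non-empty), then its degree sequence d lies on the boundary of the polytope of degree sequences P_n; specifically, d satisfies g(S,T,d,n) = 0, an inequality that is valid (≥ 0) for all degree sequences. -/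
open Finset

private lemma expr_eq (n : ℕ) (G' : SimpleGraph (Fin n)) [DecidableRel G'.Adj]
    (S T : Finset (Fin n)) (hST : Disjoint S T) (hpart : S ∪ T = univ) :
    ((S.card : ℤ) * ((n : ℤ) - 1 - T.card)
        - ∑ i ∈ S, (G'.degree i : ℤ) + ∑ i ∈ T, (G'.degree i : ℤ))
    = ∑ i ∈ S, ((S.card : ℤ) - 1 - ((S.filter (G'.Adj i)).card : ℤ))
      + ∑ j ∈ T, ((T.filter (G'.Adj j)).card : ℤ) := by
  have hn : (n : ℤ) = S.card + T.card := by
    have h := Finset.card_union_of_disjoint hST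
    rw [hpart, card_univ, Fintype.card_fin] at h
    exact_mod_cast h
  have hdeg : ∀ i, (G'.degree i : ℤ)
      = ((S.filter (G'.Adj i)).card : ℤ) + ((T.filter (G'.Adj i)).card : ℤ) := by
    intro i
    have h1 : G'.degree i = (univ.filter (G'.Adj i)).card := by
      rw [← SimpleGraph.neighborFinset_eq_filter]; rfl
    rw [h1, ← hpart, filter_union,
      Finset.card_union_of_disjoint (Finset.disjoint_filter_filter hST)]
    push_cast; ring
  have hswap : ∑ i ∈ S, ((T.filter (G'.Adj i)).card : ℤ)
      = ∑ j ∈ T, ((S.filter (G'.Adj j)).card : ℤ) := by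
    simp only [card_filter]
    push_cast
    rw [Finset.sum_comm' (s := S) (t := fun _ => T)]
    · congr 1; ext j; congr 1; ext i
      simp [G'.adj_comm]
    · intro i j; simp
  simp only [hdeg]
  rw [Finset.sum_add_distrib, Finset.sum_add_distrib, Finset.sum_sub_distrib,
    Finset.sum_sub_distrib, hswap, hn]
  simp only [Finset.sum_const, nsmul_eq_mul]
  push_cast
  ring

/-- A split graph, with vertex set partitioned into a nonempty clique `S` and a nonempty
stable set `T`, has its degree sequence on the boundary of the polytope of degree sequences:
`g(S,T,d,n) = 0`, where `g(S,T,·,n) ≥ 0` is valid for all degree sequences. -/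
theorem split_graph_degree_on_boundary (n : ℕ) (G : SimpleGraph (Fin n)) [DecidableRel G.Adj]
    (S T : Finset (Fin n)) (hS : S.Nonempty) (hT : T.Nonempty) (hST : Disjoint S T)
    (hpart : S ∪ T = univ)
    (hclique : ∀ i ∈ S, ∀ j ∈ S, i ≠ j → G.Adj i j)
    (hstable : ∀ i ∈ T, ∀ j ∈ T, ¬ G.Adj i j) :
    ((S.card : ℤ) * ((n : ℤ) - 1 - T.card)
        - ∑ i ∈ S, (G.degree i : ℤ) + ∑ i ∈ T, (G.degree i : ℤ) = 0) ∧
    (∀ (G' : SimpleGraph (Fin n)) [DecidableRel G'.Adj],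
      0 ≤ (S.card : ℤ) * ((n : ℤ) - 1 - T.card)
          - ∑ i ∈ S, (G'.degree i : ℤ) + ∑ i ∈ T, (G'.degree i : ℤ)) := by
  constructor
  · rw [expr_eq n G S T hST hpart]
    have h1 : ∀ i ∈ S, S.filter (G.Adj i) = S.erase i := by
      intro i hi
      ext j
      simp only [mem_filter, mem_erase]
      constructor
      · rintro ⟨hj, hadj⟩; exact ⟨(G.ne_of_adj hadj).symm, hj⟩
      · rintro ⟨hne, hj⟩; exact ⟨hj, hclique i hi j hj hne.symm⟩
    have h2 : ∀ j ∈ T, T.filter (G.Adj j) = ∅ := by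
      intro j hj
      ext i
      simp only [mem_filter, notMem_empty, iff_false, not_and]
      intro hi; exact hstable j hj i hi
    have hA : ∑ i ∈ S, ((S.card : ℤ) - 1 - ((S.filter (G.Adj i)).card : ℤ)) = 0 := by
      apply Finset.sum_eq_zero
      intro i hi
      rw [h1 i hi, Finset.card_erase_of_mem hi]
      have : 1 ≤ S.card := Finset.card_pos.mpr ⟨i, hi⟩
      push_cast [this]
      ring
    have hB : ∑ j ∈ T, ((T.filter (G.Adj j)).card : ℤ) = 0 := by
      apply Finset.sum_eq_zero
      intro j hj
      rw [h2 j hj]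
      simp
    rw [hA, hB]
    ring
  · intro G' _
    rw [expr_eq n G' S T hST hpart]
    have h1 : 0 ≤ ∑ i ∈ S, ((S.card : ℤ) - 1 - ((S.filter (G'.Adj i)).card : ℤ)) := by
      apply Finset.sum_nonneg
      intro i hi
      have hsub : S.filter (G'.Adj i) ⊆ S.erase i := by
        intro j hj
        simp only [mem_filter] at hj
        exact mem_erase.mpr ⟨(G'.ne_of_adj hj.2).symm, hj.1⟩
      have hle : (S.filter (G'.Adj i)).card ≤ S.card - 1 := by
        calc (S.filter (G'.Adj i)).card ≤ (S.erase i).card := Finset.card_le_card hsub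
          _ = S.card - 1 := Finset.card_erase_of_mem hi
      have hpos : 1 ≤ S.card := Finset.card_pos.mpr ⟨i, hi⟩
      have := (Nat.cast_le (α := ℤ)).mpr hle
      push_cast [hpos] at this
      linarith
    have h2 : 0 ≤ ∑ j ∈ T, ((T.filter (G'.Adj j)).card : ℤ) :=
      Finset.sum_nonneg fun j _ => Int.natCast_nonneg _
    linarith
end
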